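/- arXiv:2107.09256 — 3 statements merged into one kernel-verified Lean document; each statement's English description precedes it below -/
import Mathlib

section
/- Let Â = Ã + E where Ã ∈ ℝ^{n×n} is deterministic and E is a random matrix with E[E] = 0 and E[‖E‖₂²] < ∞. For the autonomous systems x̂_{k+1} = Â x̂_k and x̃_{k+1} = Ã x̃_k with x̂_0 = x̃_0, the bias satisfies ‖E[x̂_k − x̃_k]‖₂ ≤ Σ_{l=2}^{k} C(k,l) ‖Ã‖₂^{k−l} ‖x̃_0‖₂ E[‖E‖₂^l], assuming all moments E[‖E‖₂^l] for l ≤ k are finite. -/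
open MeasureTheory Matrix
open scoped Matrix.Norms.L2Operator

section AlgAux
variable {R : Type*} [Ring R]

/-- linear-in-B part of `(A+B)^k`. -/
def biasLsum (A B : R) (k : ℕ) : R := ∑ m ∈ Finset.range k, A ^ m * B * A ^ (k - 1 - m)

/-- remainder (at least quadratic in B). -/
def biasRterm (A B : R) (k : ℕ) : R := (A + B) ^ k - A ^ k - biasLsum A B k

lemma biasLsum_succ (A B : R) (k : ℕ) :
    biasLsum A B (k + 1) = B * A ^ k + A * biasLsum A B k := by
  unfold biasLsum
  rw [Finset.sum_range_succ', Finset.mul_sum]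
  simp only [pow_zero, one_mul, Nat.add_sub_cancel, Nat.sub_zero]
  rw [add_comm]
  congr 1
  refine Finset.sum_congr rfl fun m hm => ?_
  have : k - (m + 1) = k - 1 - m := by omega
  rw [pow_succ', this]
  simp [mul_assoc]

lemma biasRterm_succ (A B : R) (k : ℕ) :
    biasRterm A B (k + 1) = A * biasRterm A B k + B * ((A + B) ^ k - A ^ k) := by
  unfold biasRterm
  rw [biasLsum_succ, pow_succ' (A + B), pow_succ' A]
  noncomm_ring

end AlgAux

section NormAux
variable {R : Type*} [NormedRing R]

lemma biasNormPow_le (h1 : ‖(1 : R)‖ ≤ 1) (A : R) (k : ℕ) : ‖A ^ k‖ ≤ ‖A‖ ^ k := by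
  induction k with
  | zero => simpa using h1
  | succ k ih =>
    rw [pow_succ', pow_succ']
    exact (norm_mul_le _ _).trans (by gcongr)

lemma biasD_norm_le (h1 : ‖(1 : R)‖ ≤ 1) (A B : R) (k : ℕ) :
    ‖(A + B) ^ k - A ^ k‖ ≤ (‖A‖ + ‖B‖) ^ k - ‖A‖ ^ k := by
  induction k with
  | zero => simp
  | succ k ih =>
    have h1' : (A + B) ^ (k + 1) - A ^ (k + 1) =
        A * ((A + B) ^ k - A ^ k) + B * (A + B) ^ k := by
      rw [pow_succ' (A + B), pow_succ' A]; noncomm_ring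
    have hS : ‖(A + B) ^ k‖ ≤ (‖A‖ + ‖B‖) ^ k :=
      (biasNormPow_le h1 _ k).trans (by gcongr; exact norm_add_le _ _)
    rw [h1']
    calc ‖A * ((A + B) ^ k - A ^ k) + B * (A + B) ^ k‖
        ≤ ‖A * ((A + B) ^ k - A ^ k)‖ + ‖B * (A + B) ^ k‖ := norm_add_le _ _
      _ ≤ ‖A‖ * ‖(A + B) ^ k - A ^ k‖ + ‖B‖ * ‖(A + B) ^ k‖ := by
          gcongr <;> exact norm_mul_le _ _
      _ ≤ ‖A‖ * ((‖A‖ + ‖B‖) ^ k - ‖A‖ ^ k) + ‖B‖ * (‖A‖ + ‖B‖) ^ k := by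
          gcongr
      _ = (‖A‖ + ‖B‖) ^ (k + 1) - ‖A‖ ^ (k + 1) := by ring

lemma biasR_norm_le (h1 : ‖(1 : R)‖ ≤ 1) (A B : R) (k : ℕ) :
    ‖biasRterm A B k‖ ≤
      (‖A‖ + ‖B‖) ^ k - ‖A‖ ^ k - k * ‖A‖ ^ (k - 1) * ‖B‖ := by
  induction k with
  | zero => simp [biasRterm, biasLsum]
  | succ k ih =>
    rw [biasRterm_succ]
    simp only [Nat.add_sub_cancel]
    have key : ‖A‖ * ((‖A‖ + ‖B‖) ^ k - ‖A‖ ^ k - k * ‖A‖ ^ (k - 1) * ‖B‖)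
        + ‖B‖ * ((‖A‖ + ‖B‖) ^ k - ‖A‖ ^ k)
        = (‖A‖ + ‖B‖) ^ (k + 1) - ‖A‖ ^ (k + 1) - (k + 1 : ℕ) * ‖A‖ ^ k * ‖B‖ := by
      rcases k with _ | m
      · simp
      · simp only [Nat.add_sub_cancel]
        push_cast
        ring
    calc ‖A * biasRterm A B k + B * ((A + B) ^ k - A ^ k)‖
        ≤ ‖A‖ * ‖biasRterm A B k‖ + ‖B‖ * ‖(A + B) ^ k - A ^ k‖ :=
          (norm_add_le _ _).trans (by gcongr <;> exact norm_mul_le _ _)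
      _ ≤ ‖A‖ * ((‖A‖ + ‖B‖) ^ k - ‖A‖ ^ k - k * ‖A‖ ^ (k - 1) * ‖B‖)
            + ‖B‖ * ((‖A‖ + ‖B‖) ^ k - ‖A‖ ^ k) := by
          gcongr
          exact biasD_norm_le h1 A B k
      _ = _ := key

end NormAux

lemma biasBinomTail (a b : ℝ) (k : ℕ) :
    (a + b) ^ k - a ^ k - k * a ^ (k - 1) * b
      = ∑ l ∈ Finset.Icc 2 k, (k.choose l : ℝ) * a ^ (k - l) * b ^ l := by
  match k with
  | 0 => simp
  | 1 => simp
  | (m + 2) =>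
    have hset : Finset.range (m + 2 + 1) = insert 0 (insert 1 (Finset.Icc 2 (m + 2))) := by
      ext l
      simp only [Finset.mem_range, Finset.mem_insert, Finset.mem_Icc]
      omega
    have h := add_pow b a (m + 2)
    rw [hset, Finset.sum_insert (by simp), Finset.sum_insert (by simp)] at h
    have h2 : ∑ x ∈ Finset.Icc 2 (m + 2), b ^ x * a ^ (m + 2 - x) * ((m + 2).choose x : ℝ)
        = ∑ l ∈ Finset.Icc 2 (m + 2), ((m + 2).choose l : ℝ) * a ^ (m + 2 - l) * b ^ l :=
      Finset.sum_congr rfl fun l _ => by ring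
    rw [h2] at h
    rw [add_comm a b, h]
    simp only [pow_zero, one_mul, pow_one, Nat.choose_zero_right, Nat.choose_one_right,
      Nat.cast_one, mul_one, Nat.sub_zero, Nat.add_sub_cancel]
    push_cast
    ring

section MatrixAux

variable {n : ℕ}

lemma biasNormOneLe : ‖(1 : Matrix (Fin n) (Fin n) ℝ)‖ ≤ 1 := by
  rw [Matrix.cstar_norm_def, _root_.map_one]
  exact ContinuousLinearMap.norm_id_le

lemma biasTEL_norm_le (M : Matrix (Fin n) (Fin n) ℝ) (x : EuclideanSpace ℝ (Fin n)) :
    ‖(Matrix.toEuclideanLin M x : EuclideanSpace ℝ (Fin n))‖ ≤ ‖M‖ * ‖x‖ := by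
  rw [Matrix.l2_opNorm_def]
  exact ((Matrix.toEuclideanLin.trans LinearMap.toContinuousLinearMap) M).le_opNorm x

lemma biasTEL_apply (M : Matrix (Fin n) (Fin n) ℝ) (x : EuclideanSpace ℝ (Fin n)) (i : Fin n) :
    (Matrix.toEuclideanLin M x : EuclideanSpace ℝ (Fin n)) i = ∑ j, M i j * x j := rfl

variable {Ω : Type*} [MeasurableSpace Ω] {μ : MeasureTheory.Measure Ω}
variable {E : Ω → Matrix (Fin n) (Fin n) ℝ}

lemma biasMidInt (hEint : ∀ i j, Integrable (fun ω => E ω i j) μ)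
    (P Q : Matrix (Fin n) (Fin n) ℝ) (i j : Fin n) :
    Integrable (fun ω => (P * E ω * Q) i j) μ := by
  have h : (fun ω => (P * E ω * Q) i j)
      = fun ω => ∑ q, (∑ p, P i p * E ω p q) * Q q j := by
    funext ω; simp [Matrix.mul_apply]
  rw [h]
  exact integrable_finset_sum _ fun q _ =>
    (integrable_finset_sum _ fun p _ => (hEint p q).const_mul _).mul_const _

lemma biasMidZero (hEint : ∀ i j, Integrable (fun ω => E ω i j) μ)
    (hEzero : ∀ i j, ∫ ω, E ω i j ∂μ = 0)
    (P Q : Matrix (Fin n) (Fin n) ℝ) (i j : Fin n) :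
    ∫ ω, (P * E ω * Q) i j ∂μ = 0 := by
  have h : (fun ω => (P * E ω * Q) i j)
      = fun ω => ∑ q, (∑ p, P i p * E ω p q) * Q q j := by
    funext ω; simp [Matrix.mul_apply]
  rw [h, integral_finset_sum _ fun q _ =>
    (integrable_finset_sum _ fun p _ => (hEint p q).const_mul _).mul_const _]
  refine Finset.sum_eq_zero fun q _ => ?_
  rw [integral_mul_const (Q q j), integral_finset_sum _ fun p _ => (hEint p q).const_mul _]
  have : ∀ p : Fin n, ∫ ω, P i p * E ω p q ∂μ = 0 := fun p => by
    rw [integral_const_mul (P i p), hEzero p q, mul_zero]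
  simp [this]

end MatrixAux

/-- Bias bound for the autonomous linear case: with `Â = Ã + E`, `E[E] = 0`,
`x̂_k = Â^k x̃₀` and `x̃_k = Ã^k x̃₀`, the bias satisfies
`‖E[x̂_k − x̃_k]‖₂ ≤ Σ_{l=2}^k C(k,l)·‖Ã‖₂^{k−l}·‖x̃₀‖₂·E[‖E‖₂^l]`. -/
theorem autonomous_linear_bias_bound
    {n : ℕ}
    {Ω : Type*} [MeasurableSpace Ω] (μ : Measure Ω) [IsProbabilityMeasure μ]
    (Atil : Matrix (Fin n) (Fin n) ℝ) (E : Ω → Matrix (Fin n) (Fin n) ℝ)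
    (hEint : ∀ i j, Integrable (fun ω => E ω i j) μ)
    (hEzero : ∀ i j, ∫ ω, E ω i j ∂μ = 0)
    (k : ℕ)
    (hmom : ∀ l ≤ k, Integrable (fun ω => ‖E ω‖ ^ l) μ)
    (x0 : EuclideanSpace ℝ (Fin n))
    (xhat : ℕ → Ω → EuclideanSpace ℝ (Fin n))
    (hxhat : ∀ m ω, xhat m ω = Matrix.toEuclideanLin ((Atil + E ω) ^ m) x0)
    (xtil : ℕ → EuclideanSpace ℝ (Fin n))
    (hxtil : ∀ m, xtil m = Matrix.toEuclideanLin (Atil ^ m) x0) :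
    ‖(EuclideanSpace.equiv (Fin n) ℝ).symm
        (fun i => ∫ ω, (xhat k ω i - xtil k i) ∂μ)‖
      ≤ ∑ l ∈ Finset.Icc 2 k,
          (k.choose l : ℝ) * ‖Atil‖ ^ (k - l) * ‖x0‖ * ∫ ω, ‖E ω‖ ^ l ∂μ := by
  classical
  set Rm : Ω → Matrix (Fin n) (Fin n) ℝ := fun ω => biasRterm Atil (E ω) k with hRm
  set F : Ω → EuclideanSpace ℝ (Fin n) := fun ω => Matrix.toEuclideanLin (Rm ω) x0 with hF
  -- entrywise a.e.-strong-measurability of powers of `Atil + E ω`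
  have hSaesm : ∀ m (i j : Fin n),
      AEStronglyMeasurable (fun ω => ((Atil + E ω) ^ m) i j) μ := by
    intro m
    induction m with
    | zero => intro i j; exact aestronglyMeasurable_const
    | succ m ih =>
      intro i j
      have h : (fun ω => ((Atil + E ω) ^ (m + 1)) i j)
          = fun ω => ∑ p, ((Atil + E ω) ^ m) i p * (Atil p j + E ω p j) := by
        funext ω; rw [pow_succ]; simp [Matrix.mul_apply, Matrix.add_apply]
      rw [h]
      exact Finset.aestronglyMeasurable_fun_sum _ fun p _ =>
        (ih i p).mul ((hEint p j).aestronglyMeasurable.const_add (Atil p j))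
  -- the linear-in-E part: integrable entries with zero integral
  have hLint : ∀ i j, Integrable (fun ω => biasLsum Atil (E ω) k i j) μ := by
    intro i j
    have h : (fun ω => biasLsum Atil (E ω) k i j)
        = fun ω => ∑ m ∈ Finset.range k, (Atil ^ m * E ω * Atil ^ (k - 1 - m)) i j := by
      funext ω; simp [biasLsum, Matrix.sum_apply]
    rw [h]
    exact integrable_finset_sum _ fun m _ => biasMidInt hEint _ _ i j
  have hLzero : ∀ i j, ∫ ω, biasLsum Atil (E ω) k i j ∂μ = 0 := by
    intro i j
    have h : (fun ω => biasLsum Atil (E ω) k i j)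
        = fun ω => ∑ m ∈ Finset.range k, (Atil ^ m * E ω * Atil ^ (k - 1 - m)) i j := by
      funext ω; simp [biasLsum, Matrix.sum_apply]
    rw [h, integral_finset_sum _ fun m _ => biasMidInt hEint _ _ i j]
    exact Finset.sum_eq_zero fun m _ => biasMidZero hEint hEzero _ _ i j
  -- remainder entries are a.e.-strongly-measurable
  have hRaesm : ∀ i j, AEStronglyMeasurable (fun ω => Rm ω i j) μ := by
    intro i j
    have h : (fun ω => Rm ω i j)
        = fun ω => ((Atil + E ω) ^ k) i j - (Atil ^ k) i j - biasLsum Atil (E ω) k i j := by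
      funext ω; simp [hRm, biasRterm, Matrix.sub_apply]
    rw [h]
    exact ((hSaesm k i j).sub aestronglyMeasurable_const).sub (hLint i j).aestronglyMeasurable
  have hFcomp : ∀ ω i, F ω i = ∑ j, Rm ω i j * x0 j := fun ω i => biasTEL_apply _ _ _
  have hFiaesm : ∀ i, AEStronglyMeasurable (fun ω => F ω i) μ := by
    intro i
    simp only [hFcomp]
    exact Finset.aestronglyMeasurable_fun_sum _ fun j _ => (hRaesm i j).mul_const _
  have hFaesm : AEStronglyMeasurable F μ := by
    rw [aestronglyMeasurable_iff_aemeasurable]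
    refine ⟨fun ω => (MeasurableEquiv.toLp 2 (Fin n → ℝ))
      (fun i => (hFiaesm i).aemeasurable.mk _ ω), ?_, ?_⟩
    · exact (MeasurableEquiv.toLp 2 (Fin n → ℝ)).measurable.comp
        (measurable_pi_lambda _ fun i => (hFiaesm i).aemeasurable.measurable_mk)
    · have hae : ∀ᵐ ω ∂μ, ∀ i, F ω i = (hFiaesm i).aemeasurable.mk _ ω :=
        (MeasureTheory.ae_all_iff).mpr fun i => (hFiaesm i).aemeasurable.ae_eq_mk
      filter_upwards [hae] with ω hω
      ext i
      exact hω i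
  -- dominating function
  set g : Ω → ℝ := fun ω => ∑ l ∈ Finset.Icc 2 k,
      ((k.choose l : ℝ) * ‖Atil‖ ^ (k - l) * ‖x0‖) * ‖E ω‖ ^ l with hg
  have hgint : Integrable g μ :=
    integrable_finset_sum _ fun l hl => (hmom l (Finset.mem_Icc.mp hl).2).const_mul _
  have hFle : ∀ ω, ‖F ω‖ ≤ g ω := by
    intro ω
    calc ‖F ω‖ ≤ ‖Rm ω‖ * ‖x0‖ := biasTEL_norm_le _ _
      _ ≤ ((‖Atil‖ + ‖E ω‖) ^ k - ‖Atil‖ ^ k - k * ‖Atil‖ ^ (k - 1) * ‖E ω‖) * ‖x0‖ :=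
          mul_le_mul_of_nonneg_right (biasR_norm_le biasNormOneLe _ _ k) (norm_nonneg _)
      _ = (∑ l ∈ Finset.Icc 2 k, (k.choose l : ℝ) * ‖Atil‖ ^ (k - l) * ‖E ω‖ ^ l) * ‖x0‖ := by
          rw [biasBinomTail]
      _ = g ω := by
          rw [Finset.sum_mul]
          exact Finset.sum_congr rfl fun l _ => by ring
  have hFint : Integrable F μ :=
    Integrable.mono' hgint hFaesm (Filter.Eventually.of_forall hFle)
  have hFi_int : ∀ i, Integrable (fun ω => F ω i) μ := by
    intro i
    have := ContinuousLinearMap.integrable_comp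
      (EuclideanSpace.proj i : EuclideanSpace ℝ (Fin n) →L[ℝ] ℝ) hFint
    exact this
  have hLsum_int : ∀ i, Integrable (fun ω => ∑ j, biasLsum Atil (E ω) k i j * x0 j) μ :=
    fun i => integrable_finset_sum _ fun j _ => (hLint i j).mul_const _
  have hLsum_zero : ∀ i, ∫ ω, ∑ j, biasLsum Atil (E ω) k i j * x0 j ∂μ = 0 := by
    intro i
    rw [integral_finset_sum _ fun j _ => (hLint i j).mul_const _]
    refine Finset.sum_eq_zero fun j _ => ?_
    rw [integral_mul_const (x0 j), hLzero i j, zero_mul]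
  have hdecomp : ∀ i, (fun ω => xhat k ω i - xtil k i)
      = fun ω => (∑ j, biasLsum Atil (E ω) k i j * x0 j) + F ω i := by
    intro i
    funext ω
    rw [hxhat, hxtil, biasTEL_apply, biasTEL_apply, hFcomp]
    rw [← Finset.sum_sub_distrib, ← Finset.sum_add_distrib]
    refine Finset.sum_congr rfl fun j _ => ?_
    simp only [hRm, biasRterm, Matrix.sub_apply]
    ring
  have hvec : (fun i : Fin n => ∫ ω, (xhat k ω i - xtil k i) ∂μ)
      = fun i => (∫ ω, F ω ∂μ) i := by
    funext i
    rw [hdecomp i, integral_add (hLsum_int i) (hFi_int i), hLsum_zero i, zero_add]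
    exact ContinuousLinearMap.integral_comp_comm (EuclideanSpace.proj i) hFint
  rw [hvec]
  have heq : (EuclideanSpace.equiv (Fin n) ℝ).symm (fun i => (∫ ω, F ω ∂μ) i)
      = ∫ ω, F ω ∂μ := rfl
  rw [heq]
  calc ‖∫ ω, F ω ∂μ‖ ≤ ∫ ω, ‖F ω‖ ∂μ := norm_integral_le_integral_norm _
    _ ≤ ∫ ω, g ω ∂μ := integral_mono hFint.norm hgint hFle
    _ = ∑ l ∈ Finset.Icc 2 k,
          (k.choose l : ℝ) * ‖Atil‖ ^ (k - l) * ‖x0‖ * ∫ ω, ‖E ω‖ ^ l ∂μ := by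
        rw [hg, integral_finset_sum _ fun l hl => (hmom l (Finset.mem_Icc.mp hl).2).const_mul _]
        exact Finset.sum_congr rfl fun l _ => integral_const_mul _ _
end

section
/- Let A be an m×M real matrix with m ≥ M and let d ∈ ℝ^{1×M} be a row appended to A to form A₊ ∈ ℝ^{(m+1)×M}. Write the singular values of A as s₁ ≥ … ≥ s_M, let g = s_{M−1}² − s_M², let Ψ be the matrix of right-singular vectors of A, let d̄ = Ψᵀdᵀ, and let e be the M-th canonical basis vector. Then s_min(A₊)² − s_min(A)² ≥ (1/2)(g + ‖d̄‖₂² − √((g + ‖d̄‖₂²)² − 4g(eᵀd̄)²)). -/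
open Matrix

set_option maxHeartbeats 1000000

open Matrix

lemma scalar_key (g Q a u t P lam : ℝ) (hg : 0 ≤ g) (hQ : a^2 ≤ Q)
    (hlam : lam = (1/2) * (g + Q - Real.sqrt ((g+Q)^2 - 4*g*a^2)))
    (hu : 0 ≤ u) (hCS : (P - a*t)^2 ≤ (Q - a^2)*u) :
    lam * (u + t^2) ≤ g*u + P^2 := by
  set r := Real.sqrt ((g+Q)^2 - 4*g*a^2) with hr
  have hdisc : 0 ≤ (g+Q)^2 - 4*g*a^2 := by nlinarith [sq_nonneg (g - a^2), sq_nonneg (Q - a^2)]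
  have hr0 : 0 ≤ r := Real.sqrt_nonneg _
  have hr2 : r^2 = (g+Q)^2 - 4*g*a^2 := Real.sq_sqrt hdisc
  have hrle : r ≤ g + Q := by nlinarith [sq_nonneg r]
  have hquad : lam^2 - (g+Q)*lam + g*a^2 = 0 := by rw [hlam]; nlinarith [hr2]
  have hlam0 : 0 ≤ lam := by rw [hlam]; linarith
  have h2lam : 2*lam ≤ g + Q := by rw [hlam]; linarith
  have hlg : lam ≤ g := by nlinarith
  have hla : lam ≤ a^2 := by nlinarith
  rcases eq_or_lt_of_le hQ with hQe | hQlt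
  · have hP : P = a * t := by nlinarith [sq_nonneg (P - a*t)]
    subst hP
    nlinarith [mul_nonneg (sub_nonneg.2 hlg) hu, mul_nonneg (sub_nonneg.2 hla) (sq_nonneg t)]
  · have hK : 0 < g + Q - lam - a^2 := by linarith
    have hKQ : 0 < (Q - a^2) * (g + Q - lam - a^2) := mul_pos (by linarith) hK
    have h1 : 0 ≤ (g - lam) * (g + Q - lam - a^2) * ((Q - a^2)*u - (P - a*t)^2) :=
      mul_nonneg (mul_nonneg (by linarith) (by linarith)) (by linarith)
    have h2 : 0 ≤ ((g + Q - lam - a^2)*P - a*(g - lam)*t)^2 := sq_nonneg _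
    have hq2 : (Q - a^2)*t^2 * (lam^2 - (g+Q)*lam + g*a^2) = 0 :=
      mul_eq_zero_of_right _ hquad
    by_contra hcon
    push_neg at hcon
    have hprod : 0 < (Q - a^2) * (g + Q - lam - a^2) * (lam * (u + t^2) - (g*u + P^2)) :=
      mul_pos hKQ (by linarith)
    linarith [h1, h2, hq2, hprod]

lemma mulVec_dot_mulVec {n k : ℕ} (B : Matrix (Fin n) (Fin k) ℝ) (v w : Fin k → ℝ) :
    (B.mulVec v) ⬝ᵥ (B.mulVec w) = v ⬝ᵥ ((Bᵀ * B).mulVec w) := by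
  rw [← Matrix.mulVec_mulVec]
  conv_rhs => rw [Matrix.dotProduct_mulVec, ← Matrix.mulVec_transpose, Matrix.transpose_transpose]

/-- Growth of the smallest singular value under appending a row: if `A` has
full column rank with singular values `s₁ ≥ … ≥ s_M > 0` (via the spectral
decomposition `AᵀA = Ψ diag(s²) Ψᵀ`), `A₊` is obtained from `A` by appending
the row `d`, `d̄ = Ψᵀ dᵀ`, and `g = s_{M−1}² − s_M²`, then
`s_min(A₊)² ≥ s_min(A)² + (1/2)(g + ‖d̄‖² − √((g + ‖d̄‖²)² − 4g(eᵀd̄)²))`,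
stated here via the Rayleigh-quotient characterization of `s_min(A₊)²`. -/
theorem smin_growth_rank_one_row_update
    {m M : ℕ} (hM : 2 ≤ M) (hmM : M ≤ m)
    (A : Matrix (Fin m) (Fin M) ℝ) (hrank : A.rank = M)
    (d : Fin M → ℝ)
    (Aplus : Matrix (Fin (m + 1)) (Fin M) ℝ)
    (hAtop : ∀ (i : Fin m) (j : Fin M), Aplus i.castSucc j = A i j)
    (hAlast : ∀ j : Fin M, Aplus (Fin.last m) j = d j)
    (s : Fin M → ℝ) (hs : Antitone s) (hspos : ∀ j, 0 < s j)
    (Ψ : Matrix (Fin M) (Fin M) ℝ) (hΨ : Ψᵀ * Ψ = 1)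
    (hAA : Aᵀ * A = Ψ * Matrix.diagonal (fun j => s j ^ 2) * Ψᵀ)
    (dbar : Fin M → ℝ) (hdbar : dbar = Ψᵀ.mulVec d)
    (g : ℝ) (hg : g = s ⟨M - 2, by omega⟩ ^ 2 - s ⟨M - 1, by omega⟩ ^ 2) :
    ∀ x : Fin M → ℝ,
      (s ⟨M - 1, by omega⟩ ^ 2
          + (1 / 2) * (g + (∑ j, dbar j ^ 2)
            - Real.sqrt ((g + ∑ j, dbar j ^ 2) ^ 2
                - 4 * g * dbar ⟨M - 1, by omega⟩ ^ 2)))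
        * (∑ j, x j ^ 2)
      ≤ ∑ i, (Aplus.mulVec x i) ^ 2 := by
  intro x
  have hΨΨ : Ψ * Ψᵀ = 1 := mul_eq_one_comm.mp hΨ
  set jM : Fin M := ⟨M - 1, by omega⟩ with hjM
  set jM2 : Fin M := ⟨M - 2, by omega⟩ with hjM2
  set y : Fin M → ℝ := Ψᵀ.mulVec x with hy
  -- basic dot product facts
  have hdot : ∀ v : Fin M → ℝ, ∑ j, v j ^ 2 = v ⬝ᵥ v := by
    intro v; simp [dotProduct, pow_two]
  -- norms are preserved
  have hxy : ∑ j, x j ^ 2 = ∑ j, y j ^ 2 := by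
    rw [hdot, hdot, hy, mulVec_dot_mulVec, Matrix.transpose_transpose, hΨΨ,
      Matrix.one_mulVec]
  -- ‖A x‖² in terms of y
  have hAx : ∑ i, (A.mulVec x i) ^ 2 = ∑ j, s j ^ 2 * y j ^ 2 := by
    have h1 : ∑ i, (A.mulVec x i) ^ 2 = (A.mulVec x) ⬝ᵥ (A.mulVec x) := by
      simp [dotProduct, pow_two]
    rw [h1, mulVec_dot_mulVec, hAA, Matrix.mul_assoc, ← Matrix.mulVec_mulVec]
    conv_lhs => rw [Matrix.dotProduct_mulVec, ← Matrix.mulVec_transpose,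
      ← Matrix.mulVec_mulVec]
    show (Ψᵀ *ᵥ x) ⬝ᵥ ((Matrix.diagonal fun j => s j ^ 2) *ᵥ (Ψᵀ *ᵥ x)) = _
    rw [← hy]
    simp only [dotProduct, Matrix.mulVec_diagonal]
    exact Finset.sum_congr rfl fun j _ => by ring
  -- d ⬝ x = dbar ⬝ y
  have hdx : d ⬝ᵥ x = dbar ⬝ᵥ y := by
    rw [hdbar, hy, mulVec_dot_mulVec, Matrix.transpose_transpose, hΨΨ, Matrix.one_mulVec]
  -- split the sum over Fin (m+1)
  have hsplit : ∑ i, (Aplus.mulVec x i) ^ 2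
      = (∑ i, (A.mulVec x i) ^ 2) + (d ⬝ᵥ x) ^ 2 := by
    rw [Fin.sum_univ_castSucc]
    congr 1
    · apply Finset.sum_congr rfl
      intro i _
      congr 1
      simp only [Matrix.mulVec, dotProduct]
      exact Finset.sum_congr rfl fun j _ => by rw [hAtop]
    · congr 1
      simp only [Matrix.mulVec, dotProduct]
      exact Finset.sum_congr rfl fun j _ => by rw [hAlast]
  -- notation for scalar lemma
  set Q : ℝ := ∑ j, dbar j ^ 2 with hQdef
  set a : ℝ := dbar jM with hadef
  set t : ℝ := y jM with htdef
  set u : ℝ := ∑ j ∈ Finset.univ.erase jM, y j ^ 2 with hudef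
  set P : ℝ := dbar ⬝ᵥ y with hPdef
  have hu0 : 0 ≤ u := Finset.sum_nonneg fun j _ => sq_nonneg _
  have hsum_y : ∑ j, y j ^ 2 = u + t ^ 2 := by
    rw [hudef, htdef, ← Finset.sum_erase_add _ _ (Finset.mem_univ jM)]
  have hQa : Q - a ^ 2 = ∑ j ∈ Finset.univ.erase jM, dbar j ^ 2 := by
    rw [hQdef, hadef, ← Finset.sum_erase_add _ (fun j => dbar j ^ 2) (Finset.mem_univ jM)]
    ring
  have hPat : P - a * t = ∑ j ∈ Finset.univ.erase jM, dbar j * y j := by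
    rw [hPdef, hadef, htdef]
    simp only [dotProduct]
    rw [← Finset.sum_erase_add _ (fun j => dbar j * y j) (Finset.mem_univ jM)]
    ring
  have hQnn : a ^ 2 ≤ Q := by
    rw [hQdef, hadef]
    exact Finset.single_le_sum (fun j _ => sq_nonneg (dbar j)) (Finset.mem_univ jM)
  have hCS : (P - a * t) ^ 2 ≤ (Q - a ^ 2) * u := by
    rw [hPat, hQa, hudef]
    exact Finset.sum_mul_sq_le_sq_mul_sq _ _ _
  -- g ≥ 0
  have hjle : jM2 ≤ jM := by simp [hjM, hjM2, Fin.le_def]; omega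
  have hg0 : 0 ≤ g := by
    rw [hg]
    have h1 := hs hjle
    have h2 := (hspos jM).le
    nlinarith
  -- eigenvalue bound
  have heig : s jM ^ 2 * (u + t ^ 2) + g * u ≤ ∑ j, s j ^ 2 * y j ^ 2 := by
    rw [← Finset.sum_erase_add _ (fun j => s j ^ 2 * y j ^ 2) (Finset.mem_univ jM)]
    have hbound : ∀ j ∈ Finset.univ.erase jM,
        (s jM ^ 2 + g) * y j ^ 2 ≤ s j ^ 2 * y j ^ 2 := by
      intro j hj
      have hjne : j ≠ jM := Finset.ne_of_mem_erase hj
      have hjlt : (j : ℕ) ≤ M - 2 := by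
        have := j.isLt
        have : (j : ℕ) ≠ M - 1 := fun h => hjne (Fin.ext h)
        omega
      have hmono : s jM2 ≤ s j := hs (by simp [hjM2, Fin.le_def]; omega)
      have hsj : s jM2 ^ 2 ≤ s j ^ 2 := by nlinarith [(hspos jM2).le]
      have : s jM ^ 2 + g = s jM2 ^ 2 := by rw [hg]; ring
      rw [this]
      exact mul_le_mul_of_nonneg_right hsj (sq_nonneg _)
    have hsumle := Finset.sum_le_sum hbound
    rw [← Finset.mul_sum] at hsumle
    have : s jM ^ 2 * (u + t ^ 2) + g * u = (s jM ^ 2 + g) * u + s jM ^ 2 * t ^ 2 := by ring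
    rw [this, hudef, htdef]
    exact add_le_add hsumle le_rfl
  -- scalar inequality
  set lam : ℝ := (1 / 2) * (g + Q - Real.sqrt ((g + Q) ^ 2 - 4 * g * a ^ 2)) with hlamdef
  have hscal : lam * (u + t ^ 2) ≤ g * u + P ^ 2 :=
    scalar_key g Q a u t P lam hg0 hQnn (by rw [hlamdef]) hu0 hCS
  -- put it together
  have hP2 : (d ⬝ᵥ x) ^ 2 = P ^ 2 := by rw [hdx]
  rw [hsplit, hAx, hP2, hxy, hsum_y]
  have : (s jM ^ 2 + lam) * (u + t ^ 2) ≤ (∑ j, s j ^ 2 * y j ^ 2) + P ^ 2 := by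
    nlinarith [heig, hscal]
  convert this using 2
end

section
/- Let Â = Ã + σ E where Ã ∈ ℝ^{n×n} is deterministic, σ > 0, and E is a random matrix with E[‖E‖₂^{2l}] ≤ c_l < ∞ for all l ≤ k. For x̂_{k+1} = Â x̂_k, x̃_{k+1} = Ã x̃_k, x̂_0 = x̃_0, the mean-squared error satisfies E[‖x̂_k − x̃_k‖₂²] ≤ (Σ_{l=1}^{k} C(k,l) σ^l ‖Ã‖₂^{k−l} ‖x̃_0‖₂ √(c_l))² after applying Cauchy–Schwarz-type bounds, and in particular E[‖x̂_k − x̃_k‖₂²] = O(σ²) as σ → 0. -/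
open MeasureTheory Matrix
open scoped Matrix.Norms.L2Operator

private lemma mat_norm_one_le {n : ℕ} : ‖(1 : Matrix (Fin n) (Fin n) ℝ)‖ ≤ 1 := by
  rw [Matrix.cstar_norm_def, _root_.map_one]
  exact ContinuousLinearMap.norm_id_le

private lemma mat_norm_pow_le {n : ℕ} (a : Matrix (Fin n) (Fin n) ℝ) (m : ℕ) :
    ‖a ^ m‖ ≤ ‖a‖ ^ m := by
  induction m with
  | zero => simpa using mat_norm_one_le
  | succ m ih =>
      rw [pow_succ, pow_succ]
      exact (norm_mul_le _ _).trans
        (mul_le_mul ih le_rfl (norm_nonneg _) (pow_nonneg (norm_nonneg _) _))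

private lemma mat_norm_pow_sub_pow_le {n : ℕ} (a b : Matrix (Fin n) (Fin n) ℝ) (m : ℕ) :
    ‖(a + b) ^ m - a ^ m‖ ≤ (‖a‖ + ‖b‖) ^ m - ‖a‖ ^ m := by
  induction m with
  | zero => simp
  | succ m ih =>
      have hid : (a + b) ^ (m + 1) - a ^ (m + 1)
          = ((a + b) ^ m - a ^ m) * (a + b) + a ^ m * b := by
        rw [pow_succ, pow_succ]
        noncomm_ring
      rw [hid]
      have h1 : ‖((a + b) ^ m - a ^ m) * (a + b)‖
          ≤ ((‖a‖ + ‖b‖) ^ m - ‖a‖ ^ m) * (‖a‖ + ‖b‖) :=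
        (norm_mul_le _ _).trans
          (mul_le_mul ih (norm_add_le _ _) (norm_nonneg _)
            (sub_nonneg.mpr (pow_le_pow_left₀ (norm_nonneg a)
              (le_add_of_nonneg_right (norm_nonneg b)) m)))
      have h2 : ‖a ^ m * b‖ ≤ ‖a‖ ^ m * ‖b‖ :=
        (norm_mul_le _ _).trans
          (mul_le_mul_of_nonneg_right (mat_norm_pow_le a m) (norm_nonneg _))
      calc ‖((a + b) ^ m - a ^ m) * (a + b) + a ^ m * b‖
          ≤ ‖((a + b) ^ m - a ^ m) * (a + b)‖ + ‖a ^ m * b‖ := norm_add_le _ _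
        _ ≤ ((‖a‖ + ‖b‖) ^ m - ‖a‖ ^ m) * (‖a‖ + ‖b‖) + ‖a‖ ^ m * ‖b‖ := add_le_add h1 h2
        _ = (‖a‖ + ‖b‖) ^ (m + 1) - ‖a‖ ^ (m + 1) := by ring

private lemma toEuclideanLin_apply_norm_le {n : ℕ} (M : Matrix (Fin n) (Fin n) ℝ)
    (x : EuclideanSpace ℝ (Fin n)) : ‖Matrix.toEuclideanLin M x‖ ≤ ‖M‖ * ‖x‖ := by
  rw [← Matrix.coe_toEuclideanCLM_eq_toEuclideanLin, Matrix.cstar_norm_def]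
  exact (Matrix.toEuclideanCLM (𝕜 := ℝ) M).le_opNorm x

private lemma binom_expand (t s : ℝ) (k : ℕ) :
    (t + s) ^ k - t ^ k
      = ∑ l ∈ Finset.Icc 1 k, (k.choose l : ℝ) * t ^ (k - l) * s ^ l := by
  rw [add_comm t s, add_pow, Finset.range_eq_Ico,
    Finset.sum_eq_sum_Ico_succ_bot (Nat.succ_pos k)]
  simp only [pow_zero, one_mul, Nat.sub_zero, Nat.choose_zero_right, Nat.cast_one, mul_one]
  rw [Nat.succ_eq_add_one, zero_add, Finset.Ico_add_one_right_eq_Icc]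
  rw [add_sub_cancel_left]
  exact Finset.sum_congr rfl fun l _ => by ring

/-- MSE bound for the autonomous linear case: with `Â = Ã + σE`,
`E[‖E‖₂^{2l}] ≤ c_l` for `l ≤ k`, `x̂_k = Â^k x̃₀` and `x̃_k = Ã^k x̃₀`, the
mean-squared error satisfies
`E[‖x̂_k − x̃_k‖₂²] ≤ (Σ_{l=1}^k C(k,l)·σ^l·‖Ã‖₂^{k−l}·‖x̃₀‖₂·√(c_l))²`. -/
theorem autonomous_linear_mse_bound
    {n : ℕ}
    {Ω : Type*} [MeasurableSpace Ω] (μ : Measure Ω) [IsProbabilityMeasure μ]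
    (Atil : Matrix (Fin n) (Fin n) ℝ) (σ : ℝ) (hσ : 0 < σ)
    (E : Ω → Matrix (Fin n) (Fin n) ℝ)
    (hmeas : ∀ i j, Measurable fun ω => E ω i j)
    (k : ℕ) (c : ℕ → ℝ)
    (hmom : ∀ l ≤ k, Integrable (fun ω => ‖E ω‖ ^ (2 * l)) μ)
    (hc : ∀ l ≤ k, ∫ ω, ‖E ω‖ ^ (2 * l) ∂μ ≤ c l)
    (x0 : EuclideanSpace ℝ (Fin n))
    (xhat : Ω → EuclideanSpace ℝ (Fin n))
    (hxhat : ∀ ω, xhat ω = Matrix.toEuclideanLin ((Atil + σ • E ω) ^ k) x0)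
    (xtil : EuclideanSpace ℝ (Fin n))
    (hxtil : xtil = Matrix.toEuclideanLin (Atil ^ k) x0) :
    ∫ ω, ‖xhat ω - xtil‖ ^ 2 ∂μ
      ≤ (∑ l ∈ Finset.Icc 1 k,
          (k.choose l : ℝ) * σ ^ l * ‖Atil‖ ^ (k - l) * ‖x0‖ * Real.sqrt (c l)) ^ 2 := by
  rcases Nat.eq_zero_or_pos k with hk0 | hk
  · subst hk0
    have hz : ∀ ω, xhat ω - xtil = 0 := fun ω => by
      rw [hxhat, hxtil]; simp
    simp [hz]
  -- notation
  set S := Finset.Icc 1 k with hS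
  -- pointwise bound
  have hpt : ∀ ω, ‖xhat ω - xtil‖
      ≤ ∑ l ∈ S, ((k.choose l : ℝ) * σ ^ l * ‖Atil‖ ^ (k - l) * ‖x0‖) * ‖E ω‖ ^ l := by
    intro ω
    have hdiff : xhat ω - xtil
        = Matrix.toEuclideanLin ((Atil + σ • E ω) ^ k - Atil ^ k) x0 := by
      rw [hxhat, hxtil, map_sub, LinearMap.sub_apply]
    rw [hdiff]
    calc ‖Matrix.toEuclideanLin ((Atil + σ • E ω) ^ k - Atil ^ k) x0‖
        ≤ ‖(Atil + σ • E ω) ^ k - Atil ^ k‖ * ‖x0‖ := toEuclideanLin_apply_norm_le _ _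
      _ ≤ ((‖Atil‖ + σ * ‖E ω‖) ^ k - ‖Atil‖ ^ k) * ‖x0‖ := by
          apply mul_le_mul_of_nonneg_right _ (norm_nonneg _)
          have h := mat_norm_pow_sub_pow_le Atil (σ • E ω) k
          rwa [norm_smul, Real.norm_of_nonneg hσ.le] at h
      _ = _ := by
          rw [binom_expand, Finset.sum_mul]
          exact Finset.sum_congr rfl fun l _ => by rw [mul_pow]; ring
  -- measurability of the norm of E
  have hE : AEStronglyMeasurable (fun ω => ‖E ω‖) μ := by
    have h2 : AEStronglyMeasurable (fun ω => ‖E ω‖ ^ (2 * 1)) μ :=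
      (hmom 1 hk).aestronglyMeasurable
    have h3 := Real.continuous_sqrt.comp_aestronglyMeasurable h2
    refine h3.congr (Filter.Eventually.of_forall fun ω => ?_)
    simp [Real.sqrt_sq (norm_nonneg (E ω))]
  have hgl : ∀ l : ℕ, AEStronglyMeasurable (fun ω => ‖E ω‖ ^ l) μ := fun l => hE.pow l
  -- integrability of products
  have hint : ∀ l ∈ S, ∀ m ∈ S, Integrable (fun ω => ‖E ω‖ ^ (l + m)) μ := by
    intro l hl m hm
    have hl2 : l ≤ k := (Finset.mem_Icc.mp hl).2
    have hm2 : m ≤ k := (Finset.mem_Icc.mp hm).2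
    refine Integrable.mono' (((hmom l hl2).add (hmom m hm2)).div_const 2) (hgl (l + m))
      (Filter.Eventually.of_forall fun ω => ?_)
    set x := ‖E ω‖ with hx
    have hx0 : 0 ≤ x := norm_nonneg _
    rw [Real.norm_of_nonneg (by positivity)]
    simp only [Pi.add_apply]
    have e0 : x ^ (l + m) = x ^ l * x ^ m := pow_add x l m
    have e1 : x ^ (2 * l) = x ^ l * x ^ l := by rw [two_mul, pow_add]
    have e2 : x ^ (2 * m) = x ^ m * x ^ m := by rw [two_mul, pow_add]
    nlinarith [sq_nonneg (x ^ l - x ^ m)]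
  -- Cauchy–Schwarz
  have hCS : ∀ l ∈ S, ∀ m ∈ S,
      ∫ ω, ‖E ω‖ ^ (l + m) ∂μ ≤ Real.sqrt (c l) * Real.sqrt (c m) := by
    intro l hl m hm
    have hl2 : l ≤ k := (Finset.mem_Icc.mp hl).2
    have hm2 : m ≤ k := (Finset.mem_Icc.mp hm).2
    have hpq : (2 : ℝ).HolderConjugate 2 := Real.HolderConjugate.two_two
    have h2 : ENNReal.ofReal (2 : ℝ) = 2 := by norm_num
    have hmem : ∀ j ≤ k, MemLp (fun ω => ‖E ω‖ ^ j) (ENNReal.ofReal 2) μ := by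
      intro j hj
      rw [h2, memLp_two_iff_integrable_sq (hgl j)]
      exact (hmom j hj).congr (Filter.Eventually.of_forall fun ω => by
        show ‖E ω‖ ^ (2 * j) = (‖E ω‖ ^ j) ^ 2
        rw [mul_comm, pow_mul])
    have key := integral_mul_le_Lp_mul_Lq_of_nonneg hpq
      (f := fun ω => ‖E ω‖ ^ l) (g := fun ω => ‖E ω‖ ^ m)
      (Filter.Eventually.of_forall fun ω => by positivity)
      (Filter.Eventually.of_forall fun ω => by positivity)
      (hmem l hl2) (hmem m hm2)
    have hre : ∀ x : ℝ, x ^ (2 : ℝ) = x ^ (2 : ℕ) := fun x => by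
      rw [show (2 : ℝ) = ((2 : ℕ) : ℝ) by norm_num, Real.rpow_natCast]
    have hIeq : ∀ j : ℕ, (∫ ω, (‖E ω‖ ^ j) ^ (2 : ℝ) ∂μ) = ∫ ω, ‖E ω‖ ^ (2 * j) ∂μ := by
      intro j
      refine integral_congr_ae (Filter.Eventually.of_forall fun ω => ?_)
      show (‖E ω‖ ^ j) ^ (2 : ℝ) = ‖E ω‖ ^ (2 * j)
      rw [hre, ← pow_mul, mul_comm]
    have hbound : ∀ j ≤ k, (∫ ω, (‖E ω‖ ^ j) ^ (2 : ℝ) ∂μ) ^ (1 / 2 : ℝ) ≤ Real.sqrt (c j) := by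
      intro j hj
      have hnn : 0 ≤ ∫ ω, ‖E ω‖ ^ (2 * j) ∂μ :=
        integral_nonneg fun ω => by positivity
      have hcj : 0 ≤ c j := le_trans hnn (hc j hj)
      rw [hIeq j, Real.sqrt_eq_rpow]
      exact Real.rpow_le_rpow hnn (hc j hj) (by norm_num)
    calc ∫ ω, ‖E ω‖ ^ (l + m) ∂μ
        = ∫ ω, ‖E ω‖ ^ l * ‖E ω‖ ^ m ∂μ :=
          integral_congr_ae (Filter.Eventually.of_forall fun ω => pow_add _ _ _)
      _ ≤ (∫ ω, (‖E ω‖ ^ l) ^ (2 : ℝ) ∂μ) ^ (1 / 2 : ℝ)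
            * (∫ ω, (‖E ω‖ ^ m) ^ (2 : ℝ) ∂μ) ^ (1 / 2 : ℝ) := key
      _ ≤ Real.sqrt (c l) * Real.sqrt (c m) := by
          apply mul_le_mul (hbound l hl2) (hbound m hm2)
            (Real.rpow_nonneg (by
              rw [hIeq m]; exact integral_nonneg fun ω => by positivity) _)
            (Real.sqrt_nonneg _)
  -- assemble
  have hGint : Integrable (fun ω => ∑ l ∈ S, ∑ m ∈ S,
      (((k.choose l : ℝ) * σ ^ l * ‖Atil‖ ^ (k - l) * ‖x0‖)
        * ((k.choose m : ℝ) * σ ^ m * ‖Atil‖ ^ (k - m) * ‖x0‖)) * ‖E ω‖ ^ (l + m)) μ :=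
    integrable_finset_sum _ fun l hl =>
      integrable_finset_sum _ fun m hm => (hint l hl m hm).const_mul _
  have hFG : (fun ω => (∑ l ∈ S,
        ((k.choose l : ℝ) * σ ^ l * ‖Atil‖ ^ (k - l) * ‖x0‖) * ‖E ω‖ ^ l) ^ 2)
      = fun ω => ∑ l ∈ S, ∑ m ∈ S,
        (((k.choose l : ℝ) * σ ^ l * ‖Atil‖ ^ (k - l) * ‖x0‖)
          * ((k.choose m : ℝ) * σ ^ m * ‖Atil‖ ^ (k - m) * ‖x0‖)) * ‖E ω‖ ^ (l + m) := by
    funext ω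
    rw [sq, Finset.sum_mul_sum]
    exact Finset.sum_congr rfl fun l _ => Finset.sum_congr rfl fun m _ => by
      rw [pow_add]; ring
  have hFint : Integrable (fun ω => (∑ l ∈ S,
      ((k.choose l : ℝ) * σ ^ l * ‖Atil‖ ^ (k - l) * ‖x0‖) * ‖E ω‖ ^ l) ^ 2) μ := by
    rw [hFG]; exact hGint
  calc ∫ ω, ‖xhat ω - xtil‖ ^ 2 ∂μ
      ≤ ∫ ω, (∑ l ∈ S,
          ((k.choose l : ℝ) * σ ^ l * ‖Atil‖ ^ (k - l) * ‖x0‖) * ‖E ω‖ ^ l) ^ 2 ∂μ := by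
        refine integral_mono_of_nonneg (Filter.Eventually.of_forall fun ω => by positivity)
          hFint (Filter.Eventually.of_forall fun ω => ?_)
        exact pow_le_pow_left₀ (norm_nonneg _) (hpt ω) 2
    _ = ∫ ω, ∑ l ∈ S, ∑ m ∈ S,
          (((k.choose l : ℝ) * σ ^ l * ‖Atil‖ ^ (k - l) * ‖x0‖)
            * ((k.choose m : ℝ) * σ ^ m * ‖Atil‖ ^ (k - m) * ‖x0‖)) * ‖E ω‖ ^ (l + m) ∂μ := by
        rw [hFG]
    _ = ∑ l ∈ S, ∑ m ∈ S,
          (((k.choose l : ℝ) * σ ^ l * ‖Atil‖ ^ (k - l) * ‖x0‖)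
            * ((k.choose m : ℝ) * σ ^ m * ‖Atil‖ ^ (k - m) * ‖x0‖))
            * ∫ ω, ‖E ω‖ ^ (l + m) ∂μ := by
        rw [integral_finset_sum _ (fun l hl =>
          integrable_finset_sum _ fun m hm => (hint l hl m hm).const_mul _)]
        refine Finset.sum_congr rfl fun l hl => ?_
        rw [integral_finset_sum _ (fun m hm => (hint l hl m hm).const_mul _)]
        exact Finset.sum_congr rfl fun m hm => integral_const_mul _ _
    _ ≤ ∑ l ∈ S, ∑ m ∈ S,
          (((k.choose l : ℝ) * σ ^ l * ‖Atil‖ ^ (k - l) * ‖x0‖)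
            * ((k.choose m : ℝ) * σ ^ m * ‖Atil‖ ^ (k - m) * ‖x0‖))
            * (Real.sqrt (c l) * Real.sqrt (c m)) := by
        refine Finset.sum_le_sum fun l hl => Finset.sum_le_sum fun m hm => ?_
        exact mul_le_mul_of_nonneg_left (hCS l hl m hm) (by positivity)
    _ = (∑ l ∈ S,
          (k.choose l : ℝ) * σ ^ l * ‖Atil‖ ^ (k - l) * ‖x0‖ * Real.sqrt (c l)) ^ 2 := by
        rw [sq, Finset.sum_mul_sum]
        exact Finset.sum_congr rfl fun l _ => Finset.sum_congr rfl fun m _ => by ring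
end
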